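/- arXiv:2604.23206 — 2 statements merged into one kernel-verified Lean document; each statement's English description precedes it below -/
import Mathlib

section
/- Let m be a nonzero integer and let w ∈ ℚ[[u]] be a formal power series with zero constant coefficient satisfying w = u·(1 + w)^m. Let T = Σ_{k≥1} (1/k)·C(m·k, k)·u^k ∈ ℚ[[u]]. Then (1 + w) · T' = m · w', where ' denotes the formal derivative. Equivalently, T = m·log(1 + w) as formal power series. -/
open PowerSeries

/-- Generalized binomial coefficient `C(a, b) = a(a-1)⋯(a-b+1)/b!` for `a : ℚ`, `b : ℕ`. -/
noncomputable def gchoose (a : ℚ) (b : ℕ) : ℚ :=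
  (∏ i ∈ Finset.range b, (a - i)) / (Nat.factorial b)

/-- Integer power of a formal power series over `ℚ`: for nonnegative exponents the ordinary
power, for negative exponents the power of the inverse (`PowerSeries.inv`), which for a unit
(e.g. constant coefficient `1`) coincides with the power taken in the group of units. -/
noncomputable def psZpow (f : PowerSeries ℚ) (m : ℤ) : PowerSeries ℚ :=
  if 0 ≤ m then f ^ m.toNat else f⁻¹ ^ (-m).toNat

/-!
Put `F = 1 + w`. The relation `F = 1 + X F^m` says that `r ↦ F^r` solves the recursion
`A r = A (r - 1) + X A (r + m - 1)`, whose solutions over `ℤ` are determined by `A 0`.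
By Pascal's rule the series `Q r = Σ_k C(mk + r, k) X^k` solve it as well, hence `Q r = F^r Q 0`;
so does `Q r - m X Q (r + m - 1)`, which equals `1` at `r = 0` by the absorption identity
`k C(a, k) = a C(a - 1, k - 1)`, hence equals `F^r`. As `X T' = Q 0 - 1`, taking `r = 1` gives
`X F T' = Q 1 - F = m X Q m`, and absorption once more identifies `Q m` with `w'`.
-/

theorem gchoose_eq_choose (a : ℚ) (b : ℕ) : gchoose a b = Ring.choose a b := by
  rw [gchoose, Ring.choose_eq_smul, ← Polynomial.aeval_eq_smeval, ← Polynomial.eval_map_algebraMap,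
    descPochhammer_map, descPochhammer_eval_eq_prod_range, smul_eq_mul, div_eq_inv_mul]

theorem Ring.succ_nsmul_choose_succ {R : Type*} [CommRing R] [BinomialRing R] (r : R) (k : ℕ) :
    (k + 1) • Ring.choose r (k + 1) = r * Ring.choose (r - 1) k := by
  simpa using Ring.choose_smul_choose r (Nat.le_add_left 1 k)

section PascalFamily

variable {R : Type*} [CommRing R]

def IsPascalFamily (m : ℤ) (A : ℤ → R⟦X⟧) : Prop :=
  ∀ r, A r = A (r - 1) + X * A (r + m - 1)

namespace IsPascalFamily

variable {m : ℤ} {A B : ℤ → R⟦X⟧}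

theorem sub (hA : IsPascalFamily m A) (hB : IsPascalFamily m B) : IsPascalFamily m (A - B) :=
  fun r => by simp only [Pi.sub_apply, hA r, hB r]; ring

theorem mul_left (hA : IsPascalFamily m A) (c : R⟦X⟧) : IsPascalFamily m (fun r => c * A r) :=
  fun r => by simp only [hA r]; ring

theorem mul_right (hA : IsPascalFamily m A) (c : R⟦X⟧) : IsPascalFamily m (fun r => A r * c) :=
  fun r => by simp only [hA r]; ring

theorem comp_add_const (hA : IsPascalFamily m A) (s : ℤ) : IsPascalFamily m (fun r => A (r + s)) :=
  fun r => by
    dsimp only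
    rw [hA (r + s), sub_add_eq_add_sub, add_right_comm r s m, sub_add_eq_add_sub]

theorem eq_zero (hA : IsPascalFamily m A) (h0 : A 0 = 0) : A = 0 := by
  suffices h : ∀ n r, coeff n (A r) = 0 by
    funext r; ext n; simp [h]
  intro n
  induction n using Nat.strong_induction_on with
  | _ n ih =>
    have periodic : Function.Periodic (fun r => coeff n (A r)) 1 := fun r => by
      dsimp only
      rw [hA (r + 1), add_sub_cancel_right, map_add, add_eq_left]
      cases n with
      | zero => exact coeff_zero_X_mul _
      | succ k => rw [coeff_succ_X_mul, ih k k.lt_succ_self]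
    intro r
    simpa [h0] using periodic.int_mul_eq r

theorem ext (hA : IsPascalFamily m A) (hB : IsPascalFamily m B) (h0 : A 0 = B 0) : A = B :=
  sub_eq_zero.mp ((hA.sub hB).eq_zero (sub_eq_zero.mpr h0))

end IsPascalFamily

end PascalFamily

section psZpow

variable {F : ℚ⟦X⟧}

theorem psZpow_eq_val_zpow (hF : constantCoeff F ≠ 0) (r : ℤ) :
    psZpow F r = ↑((⟨F, F⁻¹, F.mul_inv_cancel hF, F.inv_mul_cancel hF⟩ : ℚ⟦X⟧ˣ) ^ r) := by
  obtain ⟨n, rfl | rfl⟩ := r.eq_nat_or_neg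
  · simp [psZpow]
  · rcases n.eq_zero_or_pos with rfl | hn
    · simp [psZpow]
    · simp [psZpow, hn.ne']

theorem psZpow_add (hF : constantCoeff F ≠ 0) (a b : ℤ) :
    psZpow F (a + b) = psZpow F a * psZpow F b := by
  simp only [psZpow_eq_val_zpow hF, zpow_add, Units.val_mul]

theorem psZpow_zero (F : ℚ⟦X⟧) : psZpow F 0 = 1 := by simp [psZpow]

theorem psZpow_one (F : ℚ⟦X⟧) : psZpow F 1 = F := by simp [psZpow]

theorem isPascalFamily_psZpow {m : ℤ} (hF : constantCoeff F ≠ 0) (h : F = 1 + X * psZpow F m) :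
    IsPascalFamily m (psZpow F) := fun r => by
  calc psZpow F r = psZpow F (r - 1) * psZpow F 1 := by rw [← psZpow_add hF, sub_add_cancel]
    _ = psZpow F (r - 1) * (1 + X * psZpow F m) := by rw [psZpow_one, ← h]
    _ = psZpow F (r - 1) + X * psZpow F (r + m - 1) := by
      rw [← sub_add_eq_add_sub, psZpow_add hF]; ring

end psZpow

noncomputable def chooseSeries (m r : ℤ) : ℚ⟦X⟧ :=
  mk fun k => Ring.choose ((m : ℚ) * k + r) k

theorem isPascalFamily_chooseSeries (m : ℤ) : IsPascalFamily m (chooseSeries m) := fun r => by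
  ext (_ | k)
  · simp [chooseSeries]
  · simp only [chooseSeries, map_add, coeff_mk, coeff_succ_X_mul]
    push_cast
    rw [show (m : ℚ) * (k + 1) + r = m * (k + 1) + r - 1 + 1 by ring, Ring.choose_succ_succ,
      add_comm]
    congr 2 <;> ring

/-- `Σ_k r/(mk+r) C(mk+r, k) X^k`, the `r`-th power of the generalized binomial series
`Σ_k 1/(mk+1) C(mk+1, k) X^k`, written without the division. -/
noncomputable def genBinomialSeries (m r : ℤ) : ℚ⟦X⟧ :=
  chooseSeries m r - C (m : ℚ) * X * chooseSeries m (r + m - 1)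

theorem isPascalFamily_genBinomialSeries (m : ℤ) : IsPascalFamily m (genBinomialSeries m) := by
  convert (isPascalFamily_chooseSeries m).sub
    (((isPascalFamily_chooseSeries m).comp_add_const (m - 1)).mul_left (C (m : ℚ) * X)) using 1
  funext r
  simp [genBinomialSeries, add_sub_assoc]

theorem genBinomialSeries_zero (m : ℤ) : genBinomialSeries m 0 = 1 := by
  ext (_ | k)
  · simp [genBinomialSeries, chooseSeries]
  · have absorb : ((k : ℚ) + 1) * Ring.choose ((m : ℚ) * (k + 1)) (k + 1) =
        (k + 1) * (m * Ring.choose ((m : ℚ) * (k + 1) - 1) k) := by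
      simpa [mul_assoc, mul_left_comm] using Ring.succ_nsmul_choose_succ ((m : ℚ) * (k + 1)) k
    simp only [genBinomialSeries, chooseSeries, map_sub, coeff_mk, mul_assoc, coeff_C_mul,
      coeff_succ_X_mul, coeff_one]
    push_cast
    rw [show (m : ℚ) * k + (0 + m - 1) = m * (k + 1) - 1 by ring, add_zero,
      mul_left_cancel₀ (by positivity) absorb, sub_self]

theorem derivative_genBinomialSeries_one (m : ℤ) :
    d⁄dX ℚ (genBinomialSeries m 1) = chooseSeries m m := by
  ext k
  have absorb := Ring.succ_nsmul_choose_succ ((m : ℚ) * (k + 1) + 1) k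
  simp only [genBinomialSeries, chooseSeries, coeff_derivative, map_sub, coeff_mk, mul_assoc,
    coeff_C_mul, coeff_succ_X_mul, nsmul_eq_mul, add_sub_cancel_right] at absorb ⊢
  push_cast at absorb ⊢
  rw [show (m : ℚ) * k + (1 + m - 1) = m * (k + 1) by ring,
    show (m : ℚ) * k + m = m * (k + 1) by ring]
  linear_combination absorb

noncomputable def logSeries (m : ℤ) : ℚ⟦X⟧ :=
  mk fun k => if k = 0 then 0 else gchoose ((m : ℚ) * k) k / k

theorem X_mul_derivative_logSeries (m : ℤ) : X * d⁄dX ℚ (logSeries m) = chooseSeries m 0 - 1 := by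
  ext (_ | k)
  · simp [chooseSeries]
  · simp only [logSeries, chooseSeries, coeff_succ_X_mul, coeff_derivative, coeff_mk, map_sub,
      coeff_one, gchoose_eq_choose]
    push_cast
    field_simp
    simp

theorem lagrange_log_identity_general (m : ℤ) (w : PowerSeries ℚ)
    (hw : w = X * psZpow (1 + w) m)
    (T : PowerSeries ℚ)
    (hT : T = PowerSeries.mk fun k => if k = 0 then 0 else gchoose ((m : ℚ) * k) k / k) :
    (1 + w) * (PowerSeries.derivative ℚ T) =
      PowerSeries.C (m : ℚ) * (PowerSeries.derivative ℚ w) := by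
  set F := 1 + w with hF
  have hF0 : constantCoeff F ≠ 0 := by rw [hF, map_add, hw]; simp
  have hPascal : IsPascalFamily m (psZpow F) := isPascalFamily_psZpow hF0 (by rw [← hw])
  have hpow : psZpow F = genBinomialSeries m :=
    hPascal.ext (isPascalFamily_genBinomialSeries m) (by rw [psZpow_zero, genBinomialSeries_zero])
  have hchoose : chooseSeries m = fun r => psZpow F r * chooseSeries m 0 :=
    (isPascalFamily_chooseSeries m).ext (hPascal.mul_right _) (by simp [psZpow_zero])
  have hF1 : F = genBinomialSeries m 1 := by rw [← psZpow_one F, hpow]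
  have hw' : d⁄dX ℚ w = chooseSeries m m := by
    rw [← derivative_genBinomialSeries_one, ← hF1, hF, map_add, derivative_one, zero_add]
  have hT' : T = logSeries m := hT
  refine mul_left_cancel₀ X_ne_zero ?_
  calc X * (F * d⁄dX ℚ T) = F * (chooseSeries m 0 - 1) := by
        rw [hT', ← X_mul_derivative_logSeries]; ring
    _ = chooseSeries m 1 - genBinomialSeries m 1 := by
        rw [congrFun hchoose 1, psZpow_one, ← hF1]; ring
    _ = X * (C (m : ℚ) * d⁄dX ℚ w) := by
        rw [hw', genBinomialSeries, add_sub_cancel_left]; ring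

/-- If `w ∈ ℚ[[u]]` has zero constant coefficient and satisfies `w = u(1+w)^m`, and
`T = Σ_{k≥1} (1/k)·C(mk, k)·u^k`, then `(1 + w) · T' = m · w'`
(the differential form of `T = m·log(1+w)`). -/
theorem lagrange_log_identity (m : ℤ) (hm : m ≠ 0) (w : PowerSeries ℚ)
    (hw0 : constantCoeff w = 0) (hw : w = X * psZpow (1 + w) m)
    (T : PowerSeries ℚ)
    (hT : T = PowerSeries.mk fun k => if k = 0 then 0 else gchoose ((m : ℚ) * k) k / k) :
    (1 + w) * (PowerSeries.derivative ℚ T) =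
      PowerSeries.C (m : ℚ) * (PowerSeries.derivative ℚ w) :=
  lagrange_log_identity_general m w hw T hT
end

section
/- Let m be a nonzero integer and let w ∈ ℚ[[u]] be a formal power series with zero constant coefficient satisfying w = u·(1 + w)^m. Then the formal derivative w' satisfies (1 + (1 − m)·w) · w' = (1 + w)^{m+1} in ℚ[[u]]. -/
/-!
Since `1 + w` is a unit `s`, the power `psZpow (1 + w) m` is the group power `s ^ m`, whose
derivative is `m s^(m-1) w'` by the Leibniz rule for integer powers of units. Differentiating
`w = X s^m` gives `w' = s^m + m X s^(m-1) w'`; multiplying by `s` and using `X s^m = w` turns this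
into `(s - m w) w' = s^(m+1)`, which is the claim because `s = 1 + w`.
-/

open PowerSeries

theorem Derivation.leibniz_units_zpow {R A M : Type*} [CommSemiring R] [CommRing A]
    [Algebra R A] [AddCommGroup M] [Module A M] [Module R M] [IsScalarTower R A M]
    (D : Derivation R A M) (u : Aˣ) (n : ℤ) :
    D ↑(u ^ n) = n • u ^ (n - 1) • D u := by
  have step (k : ℤ) : D ↑(u ^ (k + 1)) = u ^ k • D u + u • D ↑(u ^ k) := by
    rw [zpow_add_one, Units.val_mul, D.leibniz]; rfl
  induction n using Int.inductionOn' (b := 0) with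
  | zero => simp
  | succ k _ ih =>
    rw [step, ih, smul_comm u (k : ℤ), smul_smul, ← zpow_one_add, add_sub_cancel_right,
      add_sub_cancel, add_smul, one_smul, add_comm]
  | pred k _ ih =>
    have h : u • D ↑(u ^ (k - 1)) = (k - 1) • u ^ (k - 1) • D u := by
      rw [sub_smul, one_smul, eq_sub_iff_add_eq', ← step, sub_add_cancel, ih]
    rw [← inv_smul_smul u (D _), h, smul_comm, smul_smul, ← zpow_neg_one, ← zpow_add,
      neg_add_eq_sub]

theorem PowerSeries.val_inv_eq_inv_val {k : Type*} [Field k] (u : k⟦X⟧ˣ) :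
    (↑u⁻¹ : k⟦X⟧) = (↑u)⁻¹ :=
  Units.inv_eq_of_mul_eq_one_right
    (PowerSeries.mul_inv_cancel _ (u.isUnit.map constantCoeff).ne_zero)

theorem psZpow_units_val (u : ℚ⟦X⟧ˣ) (m : ℤ) : psZpow u m = ↑(u ^ m) := by
  unfold psZpow
  split_ifs with h
  · rw [← Units.val_pow_eq_pow_val, ← zpow_natCast, Int.toNat_of_nonneg h]
  · rw [← PowerSeries.val_inv_eq_inv_val, ← Units.val_pow_eq_pow_val, ← zpow_natCast,
      Int.toNat_of_nonneg (by omega), inv_zpow', neg_neg]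

theorem derivative_identity_general (m : ℤ) (w : PowerSeries ℚ)
    (hw0 : constantCoeff w = 0) (hw : w = X * psZpow (1 + w) m) :
    (1 + PowerSeries.C (1 - (m : ℚ)) * w) * (PowerSeries.derivative ℚ w) =
      psZpow (1 + w) (m + 1) := by
  obtain ⟨s, hs⟩ : IsUnit (1 + w) := isUnit_iff_constantCoeff.mpr (by simp [hw0])
  rw [← hs, psZpow_units_val] at hw ⊢
  set w' := derivative ℚ w
  have hder : w' = (X : ℚ⟦X⟧) * (m * (↑(s ^ (m - 1)) * w')) + ↑(s ^ m) := by
    have hds : derivative ℚ ↑s = w' := by simp [hs, w']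
    have h := congrArg (derivative ℚ) hw
    rw [Derivation.leibniz, Derivation.leibniz_units_zpow, hds, derivative_X] at h
    simpa only [Units.smul_def, zsmul_eq_mul, smul_eq_mul, mul_one] using h
  have hpow : (↑s * ↑(s ^ (m - 1)) : ℚ⟦X⟧) = ↑(s ^ m) := by
    rw [← Units.val_mul, ← zpow_one_add, add_sub_cancel]
  rw [zpow_add_one, Units.val_mul, map_sub, map_one, map_intCast]
  linear_combination (↑s : ℚ⟦X⟧) * hder - m * w' * hw + m * X * w' * hpow - w' * hs

/-- If `w` has zero constant coefficient and satisfies `w = u(1+w)^m`, then its formal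
derivative satisfies `(1 + (1−m)w) · w' = (1+w)^{m+1}`. -/
theorem derivative_identity (m : ℤ) (hm : m ≠ 0) (w : PowerSeries ℚ)
    (hw0 : constantCoeff w = 0) (hw : w = X * psZpow (1 + w) m) :
    (1 + PowerSeries.C (1 - (m : ℚ)) * w) * (PowerSeries.derivative ℚ w) =
      psZpow (1 + w) (m + 1) :=
  derivative_identity_general m w hw0 hw
end
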